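/- With the same setup (A, B traceless 2×2 real matrices, det A = 1, Fl^t = cos t·I + sin t·A, Q_B(z) = −(1/2)⟨JBz,z⟩), the integrating operator satisfies S(Q_B)(z) := (1/2π)∫₀^{2π}(t−π) Q_B(Fl^t z) dt = (1/4) Q_{[A,B]}(z) for all z ∈ ℝ², where [A,B] = AB − BA. -/

import Mathlib

open Real Matrix MeasureTheory intervalIntegral

/-- The quadratic form `Q_M(z) = -(1/2)⟨J M z, z⟩` with `J = [[0,-1],[1,0]]`. -/
noncomputable def Qform (M : Matrix (Fin 2) (Fin 2) ℝ) (z : Fin 2 → ℝ) : ℝ :=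
  -(1 / 2) * (((!![0, -1; 1, 0] : Matrix (Fin 2) (Fin 2) ℝ) * M).mulVec z ⬝ᵥ z)

/-- The 2π-periodic linear flow `Fl^t = cos t · I + sin t · A`. -/
noncomputable def Fl (A : Matrix (Fin 2) (Fin 2) ℝ) (t : ℝ) : Matrix (Fin 2) (Fin 2) ℝ :=
  (Real.cos t) • (1 : Matrix (Fin 2) (Fin 2) ℝ) + (Real.sin t) • A

/-!
Since `Fl^t z = cos t • z + sin t • A z`, the function `t ↦ Q_B(Fl^t z)` is a trigonometric
polynomial in `2t`. Against the weight `t - π`, which is odd about `π`, its constant and `cos 2t`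
parts integrate to zero over `[0, 2π]`, while its `sin 2t` part, whose coefficient is half the
polar form of `Q_B` at `(z, A z)`, contributes `-π` times that coefficient. For traceless `A`
one has `Aᵀ J + J A = (tr A) J = 0`, which turns this polar form into `-Q_{[A,B]}(z)`.
-/

noncomputable def Qpolar (M : Matrix (Fin 2) (Fin 2) ℝ) (x y : Fin 2 → ℝ) : ℝ :=
  -(1 / 2) * ((!![0, -1; 1, 0] * M) *ᵥ x ⬝ᵥ y + (!![0, -1; 1, 0] * M) *ᵥ y ⬝ᵥ x)

theorem Qform_smul_add_smul (M : Matrix (Fin 2) (Fin 2) ℝ) (a b : ℝ) (x y : Fin 2 → ℝ) :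
    Qform M (a • x + b • y) = a ^ 2 * Qform M x + b ^ 2 * Qform M y + a * b * Qpolar M x y := by
  simp only [Qform, Qpolar, mulVec_add, mulVec_smul, dotProduct_add, add_dotProduct,
    smul_dotProduct, dotProduct_smul, smul_eq_mul]
  ring

theorem Fl_mulVec (A : Matrix (Fin 2) (Fin 2) ℝ) (t : ℝ) (z : Fin 2 → ℝ) :
    Fl A t *ᵥ z = cos t • z + sin t • A *ᵥ z := by
  simp [Fl, add_mulVec, smul_mulVec]

theorem Qform_commutator_eq_neg_Qpolar (A B : Matrix (Fin 2) (Fin 2) ℝ) (hA : A.trace = 0)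
    (z : Fin 2 → ℝ) : Qform (A * B - B * A) z = -Qpolar B z (A *ᵥ z) := by
  have hA11 : A 1 1 = -A 0 0 := by rw [trace_fin_two] at hA; linarith
  simp only [Qform, Qpolar, dotProduct, mulVec, mul_apply, Matrix.sub_apply, Fin.sum_univ_two,
    of_apply, cons_val', cons_val_zero, cons_val_one, cons_val_fin_one, hA11]
  ring

theorem Real.sin_nat_mul_two_pi (n : ℕ) : sin (n * (2 * π)) = 0 := by
  simpa [mul_assoc] using sin_nat_mul_two_pi_sub 0 n

theorem integral_sub_pi_mul_cos_nat_mul {n : ℕ} (hn : n ≠ 0) :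
    ∫ t in (0 : ℝ)..2 * π, (t - π) * cos (n * t) = 0 := by
  have hn' : (n : ℝ) ≠ 0 := Nat.cast_ne_zero.mpr hn
  have hderiv : ∀ t ∈ Set.uIcc 0 (2 * π), HasDerivAt
      (fun t => (t - π) * sin (n * t) / n + cos (n * t) / n ^ 2) ((t - π) * cos (n * t)) t := by
    intro t _
    have hlin : HasDerivAt (fun u : ℝ => n * u) n t := by
      simpa using (hasDerivAt_id t).const_mul (n : ℝ)
    refine ((((hasDerivAt_id' t).sub_const π).mul hlin.sin).div_const n |>.add
      (hlin.cos.div_const (n ^ 2))).congr_deriv ?_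
    field_simp
    ring
  rw [integral_eq_sub_of_hasDerivAt hderiv (Continuous.intervalIntegrable (by fun_prop) _ _)]
  simp [sin_nat_mul_two_pi, cos_nat_mul_two_pi]

theorem integral_sub_pi_mul_sin_nat_mul {n : ℕ} (hn : n ≠ 0) :
    ∫ t in (0 : ℝ)..2 * π, (t - π) * sin (n * t) = -(2 * π / n) := by
  have hn' : (n : ℝ) ≠ 0 := Nat.cast_ne_zero.mpr hn
  have hderiv : ∀ t ∈ Set.uIcc 0 (2 * π), HasDerivAt
      (fun t => -((t - π) * cos (n * t) / n) + sin (n * t) / n ^ 2)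
      ((t - π) * sin (n * t)) t := by
    intro t _
    have hlin : HasDerivAt (fun u : ℝ => n * u) n t := by
      simpa using (hasDerivAt_id t).const_mul (n : ℝ)
    refine ((((hasDerivAt_id' t).sub_const π).mul hlin.cos).div_const n).neg |>.add
      (hlin.sin.div_const (n ^ 2)) |>.congr_deriv ?_
    field_simp
    ring
  rw [integral_eq_sub_of_hasDerivAt hderiv (Continuous.intervalIntegrable (by fun_prop) _ _)]
  simp only [sin_nat_mul_two_pi, cos_nat_mul_two_pi, mul_zero, sin_zero, cos_zero]
  ring

theorem integral_sub_pi : ∫ t in (0 : ℝ)..2 * π, (t - π) = 0 := by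
  rw [integral_sub intervalIntegrable_id intervalIntegrable_const, integral_id,
    intervalIntegral.integral_const, smul_eq_mul]
  ring

theorem Qform_Fl_mulVec (A B : Matrix (Fin 2) (Fin 2) ℝ) (t : ℝ) (z : Fin 2 → ℝ) :
    Qform B (Fl A t *ᵥ z) = (Qform B z + Qform B (A *ᵥ z)) / 2
      + (Qform B z - Qform B (A *ᵥ z)) / 2 * cos (2 * t)
      + Qpolar B z (A *ᵥ z) / 2 * sin (2 * t) := by
  rw [Fl_mulVec, Qform_smul_add_smul, sin_sq, cos_sq, sin_two_mul]
  ring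

theorem integral_sub_pi_mul_trigPoly_two (a b c : ℝ) :
    ∫ t in (0 : ℝ)..2 * π, (t - π) * (a + b * cos (2 * t) + c * sin (2 * t)) = -(π * c) := by
  have hcos := integral_sub_pi_mul_cos_nat_mul two_ne_zero
  have hsin := integral_sub_pi_mul_sin_nat_mul two_ne_zero
  push_cast at hcos hsin
  have hint : ∀ f : ℝ → ℝ, Continuous f → IntervalIntegrable f volume 0 (2 * π) :=
    fun f hf => hf.intervalIntegrable _ _
  have hsplit : (fun t => (t - π) * (a + b * cos (2 * t) + c * sin (2 * t))) =
      fun t => a * (t - π) + b * ((t - π) * cos (2 * t)) + c * ((t - π) * sin (2 * t)) := by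
    funext t
    ring
  rw [hsplit, integral_add (hint _ (by fun_prop)) (hint _ (by fun_prop)),
    integral_add (hint _ (by fun_prop)) (hint _ (by fun_prop)),
    intervalIntegral.integral_const_mul, intervalIntegral.integral_const_mul,
    intervalIntegral.integral_const_mul, integral_sub_pi, hcos, hsin]
  field_simp
  ring

theorem integrating_operator_of_quadratic_form_general
    (A B : Matrix (Fin 2) (Fin 2) ℝ)
    (htrA : A.trace = 0)
    (z : Fin 2 → ℝ) :
    (1 / (2 * π)) * ∫ t in (0:ℝ)..(2 * π), (t - π) * Qform B ((Fl A t).mulVec z)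
      = (1 / 4) * Qform (A * B - B * A) z := by
  simp_rw [Qform_Fl_mulVec]
  rw [integral_sub_pi_mul_trigPoly_two, Qform_commutator_eq_neg_Qpolar A B htrA]
  field_simp
  ring

theorem integrating_operator_of_quadratic_form
    (A B : Matrix (Fin 2) (Fin 2) ℝ)
    (htrA : A.trace = 0) (htrB : B.trace = 0) (hdet : A.det = 1)
    (z : Fin 2 → ℝ) :
    (1 / (2 * π)) * ∫ t in (0:ℝ)..(2 * π), (t - π) * Qform B ((Fl A t).mulVec z)
      = (1 / 4) * Qform (A * B - B * A) z :=
  integrating_operator_of_quadratic_form_general A B htrA z
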